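/- For a monoid S: (i) every retract of an InD-injective (respectively PInD-injective) right S-act is InD-injective (respectively PInD-injective); (ii) for a family {A_i : i ∈ I} of right S-acts, the product ∏_{i∈I} A_i is InD-injective (respectively PInD-injective) if and only if every A_i is InD-injective (respectively PInD-injective); (iii) if every member of a family {A_i : i ∈ I} of right S-acts is InD-injective (respectively PInD-injective), then the coproduct ⨆_{i∈I} A_i is InD-injective (respectively PInD-injective). -/
import Mathlib


universe u

/-- A right `S`-act structure on a nonempty type `A`: a right action of the monoid `S`. -/
class RightAct (S : Type u) [Monoid S] (A : Type u) : Type u where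
  act : A → S → A
  act_one : ∀ a : A, act a 1 = a
  act_mul : ∀ (a : A) (s t : S), act (act a s) t = act a (s * t)
  nonempty : Nonempty A

infixl:70 " ⊛ " => RightAct.act

/-- `S` is left reversible: every two right ideals (equiv. principal ones) intersect. -/
def LeftReversible (S : Type u) [Monoid S] : Prop :=
  ∀ a b : S, ∃ u v : S, a * u = b * v

/-- A left zero element of the monoid `S`. -/
def IsLeftZero (S : Type u) [Monoid S] (z : S) : Prop :=
  ∀ s : S, z * s = z

/-- `f : A → B` is a homomorphism of right `S`-acts. -/
def IsActHom (S : Type u) [Monoid S] {A B : Type u} [RightAct S A] [RightAct S B]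
    (f : A → B) : Prop :=
  ∀ (a : A) (s : S), f (a ⊛ s) = f a ⊛ s

/-- The restriction of `f : A → B` to the subset `C` is a homomorphism of right `S`-acts. -/
def IsActHomOn (S : Type u) [Monoid S] {A B : Type u} [RightAct S A] [RightAct S B]
    (f : A → B) (C : Set A) : Prop :=
  ∀ a ∈ C, ∀ s : S, f (a ⊛ s) = f a ⊛ s

/-- A subact: a nonempty subset closed under the action. -/
def IsSubact (S : Type u) [Monoid S] {A : Type u} [RightAct S A] (C : Set A) : Prop :=
  C.Nonempty ∧ ∀ a ∈ C, ∀ s : S, a ⊛ s ∈ C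

/-- A zero element of an act: fixed by the action of every `s ∈ S`. -/
def IsZeroElem (S : Type u) [Monoid S] {A : Type u} [RightAct S A] (θ : A) : Prop :=
  ∀ s : S, θ ⊛ s = θ

/-- A subset `D` (viewed as an act) is decomposable: it is the disjoint union of two
nonempty subacts. -/
def DecomposableSet (S : Type u) [Monoid S] {A : Type u} [RightAct S A] (D : Set A) : Prop :=
  ∃ B C : Set A, IsSubact S B ∧ IsSubact S C ∧ B ∪ C = D ∧ B ∩ C = ∅

/-- A subset (viewed as an act) is indecomposable. -/
def IndecomposableSet (S : Type u) [Monoid S] {A : Type u} [RightAct S A] (D : Set A) : Prop :=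
  ¬ DecomposableSet S D

/-- The act `A` is decomposable. -/
def Decomposable (S : Type u) [Monoid S] (A : Type u) [RightAct S A] : Prop :=
  DecomposableSet S (Set.univ : Set A)

/-- The act `A` is indecomposable. -/
def Indecomposable (S : Type u) [Monoid S] (A : Type u) [RightAct S A] : Prop :=
  ¬ Decomposable S A

/-- A cyclic act: generated by a single element. -/
def CyclicAct (S : Type u) [Monoid S] (A : Type u) [RightAct S A] : Prop :=
  ∃ a : A, ∀ x : A, ∃ s : S, x = a ⊛ s

/-- `A` is a retract of `B`. -/
def IsRetractOf (S : Type u) [Monoid S] (A B : Type u) [RightAct S A] [RightAct S B] : Prop :=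
  ∃ (i : A → B) (p : B → A), IsActHom S i ∧ IsActHom S p ∧ ∀ a : A, p (i a) = a

/-- `Q` is an injective act: every homomorphism from a subact `C` of any act `B` into `Q`
extends to `B`. -/
def ActInjective (S : Type u) [Monoid S] (Q : Type u) [RightAct S Q] : Prop :=
  ∀ (B : Type u) [RightAct S B], ∀ C : Set B, IsSubact S C →
    ∀ f : B → Q, IsActHomOn S f C →
      ∃ g : B → Q, IsActHom S g ∧ Set.EqOn g f C

/-- `Q` is InC-injective: injective relative to all embeddings into indecomposable acts. -/
def InCInjective (S : Type u) [Monoid S] (Q : Type u) [RightAct S Q] : Prop :=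
  ∀ (B : Type u) [RightAct S B], Indecomposable S B → ∀ C : Set B, IsSubact S C →
    ∀ f : B → Q, IsActHomOn S f C →
      ∃ g : B → Q, IsActHom S g ∧ Set.EqOn g f C

/-- `Q` is InD-injective: injective relative to all embeddings of indecomposable acts. -/
def InDInjective (S : Type u) [Monoid S] (Q : Type u) [RightAct S Q] : Prop :=
  ∀ (B : Type u) [RightAct S B], ∀ C : Set B, IsSubact S C → IndecomposableSet S C →
    ∀ f : B → Q, IsActHomOn S f C →
      ∃ g : B → Q, IsActHom S g ∧ Set.EqOn g f C

/-- `Q` is PInD-injective: every monomorphism from an indecomposable subact extends. -/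
def PInDInjective (S : Type u) [Monoid S] (Q : Type u) [RightAct S Q] : Prop :=
  ∀ (B : Type u) [RightAct S B], ∀ C : Set B, IsSubact S C → IndecomposableSet S C →
    ∀ f : B → Q, IsActHomOn S f C → Set.InjOn f C →
      ∃ g : B → Q, IsActHom S g ∧ Set.EqOn g f C

/-- `A` is quasi injective: homomorphisms from subacts of `A` to `A` extend to `A`. -/
def QuasiInjective (S : Type u) [Monoid S] (A : Type u) [RightAct S A] : Prop :=
  ∀ C : Set A, IsSubact S C → ∀ f : A → A, IsActHomOn S f C →
    ∃ g : A → A, IsActHom S g ∧ Set.EqOn g f C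

/-- `A` is pseudo injective: monomorphisms from subacts of any act into `A` extend. -/
def PseudoInjective (S : Type u) [Monoid S] (A : Type u) [RightAct S A] : Prop :=
  ∀ (C : Type u) [RightAct S C], ∀ B : Set C, IsSubact S B →
    ∀ f : C → A, IsActHomOn S f B → Set.InjOn f B →
      ∃ g : C → A, IsActHom S g ∧ Set.EqOn g f B

/-- A subact `Q` of `A` (viewed as an act in its own right) is injective. -/
def ActInjectiveSet (S : Type u) [Monoid S] {A : Type u} [RightAct S A] (Q : Set A) : Prop :=
  ∀ (B : Type u) [RightAct S B], ∀ C : Set B, IsSubact S C →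
    ∀ f : B → A, IsActHomOn S f C → (∀ c ∈ C, f c ∈ Q) →
      ∃ g : B → A, IsActHom S g ∧ (∀ b : B, g b ∈ Q) ∧ Set.EqOn g f C

/-- A subact `Q` of `A` (viewed as an act in its own right) is InD-injective. -/
def InDInjectiveSet (S : Type u) [Monoid S] {A : Type u} [RightAct S A] (Q : Set A) : Prop :=
  ∀ (B : Type u) [RightAct S B], ∀ C : Set B, IsSubact S C → IndecomposableSet S C →
    ∀ f : B → A, IsActHomOn S f C → (∀ c ∈ C, f c ∈ Q) →
      ∃ g : B → A, IsActHom S g ∧ (∀ b : B, g b ∈ Q) ∧ Set.EqOn g f C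

/-- A subact `Q` of `A` (viewed as an act in its own right) is PInD-injective. -/
def PInDInjectiveSet (S : Type u) [Monoid S] {A : Type u} [RightAct S A] (Q : Set A) : Prop :=
  ∀ (B : Type u) [RightAct S B], ∀ C : Set B, IsSubact S C → IndecomposableSet S C →
    ∀ f : B → A, IsActHomOn S f C → Set.InjOn f C → (∀ c ∈ C, f c ∈ Q) →
      ∃ g : B → A, IsActHom S g ∧ (∀ b : B, g b ∈ Q) ∧ Set.EqOn g f C

/-- The monoid `S` as a right act over itself, by multiplication. -/
instance selfAct (S : Type u) [Monoid S] : RightAct S S where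
  act a s := a * s
  act_one := mul_one
  act_mul a s t := mul_assoc a s t
  nonempty := ⟨1⟩

/-- `Q` is weakly injective: homomorphisms from right ideals of `S` into `Q` extend to `S`. -/
def WeaklyInjective (S : Type u) [Monoid S] (Q : Type u) [RightAct S Q] : Prop :=
  ∀ I : Set S, IsSubact S I → ∀ f : S → Q, IsActHomOn S f I →
    ∃ g : S → Q, IsActHom S g ∧ Set.EqOn g f I

/-- The relation whose equivalence closure has the indecomposable components as classes. -/
def ActRel (S : Type u) [Monoid S] {A : Type u} [RightAct S A] (a b : A) : Prop :=
  ∃ s : S, b = a ⊛ s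

/-- The indecomposable component of the element `a` of an act. -/
def ActComponent (S : Type u) [Monoid S] {A : Type u} [RightAct S A] (a : A) : Set A :=
  {b | Relation.EqvGen (ActRel S) a b}

/-- The coproduct (disjoint union) of a family of acts. -/
instance sigmaAct (S : Type u) [Monoid S] {I : Type u} [Nonempty I] (A : I → Type u)
    [∀ i, RightAct S (A i)] : RightAct S (Σ i, A i) where
  act x s := ⟨x.1, x.2 ⊛ s⟩
  act_one x := by cases x; simp [RightAct.act_one]
  act_mul x s t := by cases x; simp [RightAct.act_mul]
  nonempty := ⟨⟨Classical.arbitrary I, Classical.choice (RightAct.nonempty (S := S))⟩⟩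


/-- The product of a family of acts, with componentwise action. -/
instance piAct (S : Type u) [Monoid S] {I : Type u} (A : I → Type u)
    [∀ i, RightAct S (A i)] : RightAct S (∀ i, A i) where
  act f s := fun i => f i ⊛ s
  act_one f := by funext i; exact RightAct.act_one _
  act_mul f s t := by funext i; exact RightAct.act_mul _ _ _
  nonempty := ⟨fun i => Classical.choice (RightAct.nonempty (S := S))⟩


section Aux

variable {S : Type u} [Monoid S]

theorem my_ind_imp_pind {Q : Type u} [RightAct S Q] (h : InDInjective S Q) :
    PInDInjective S Q :=
  fun B _ C hC hI f hf _ => h B C hC hI f hf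

/-- PInD-injective implies InD-injective, via quotienting by the kernel of `f` on `C`. -/
theorem my_pind_imp_ind {Q : Type u} [RightAct S Q] (hQ : PInDInjective S Q) :
    InDInjective S Q := by
  intro B _ C hC hInd f hf
  classical
  set r : B → B → Prop := fun x y => x = y ∨ (x ∈ C ∧ y ∈ C ∧ f x = f y) with hr
  have hsymm : ∀ {x y : B}, r x y → r y x := by
    rintro x y (rfl | ⟨hx, hy, hxy⟩)
    · exact Or.inl rfl
    · exact Or.inr ⟨hy, hx, hxy.symm⟩
  have htrans : ∀ {x y z : B}, r x y → r y z → r x z := by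
    rintro x y z (rfl | ⟨hx, hy, hxy⟩) (rfl | ⟨hy', hz, hyz⟩)
    · exact Or.inl rfl
    · exact Or.inr ⟨hy', hz, hyz⟩
    · exact Or.inr ⟨hx, hy, hxy⟩
    · exact Or.inr ⟨hx, hz, hxy.trans hyz⟩
  have hcomp : ∀ (x y : B) (s : S), r x y → r (x ⊛ s) (y ⊛ s) := by
    rintro x y s (rfl | ⟨hx, hy, hxy⟩)
    · exact Or.inl rfl
    · exact Or.inr ⟨hC.2 x hx s, hC.2 y hy s, by rw [hf x hx s, hf y hy s, hxy]⟩
  letI st : Setoid B := ⟨r, ⟨fun x => Or.inl rfl, hsymm, htrans⟩⟩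
  letI actB' : RightAct S (Quotient st) :=
    { act := fun x s =>
        Quotient.lift (fun b => Quotient.mk st (b ⊛ s))
          (fun a b h => Quotient.sound (hcomp a b s h)) x
      act_one := fun x => Quotient.inductionOn x fun b => by
        show Quotient.mk st (b ⊛ (1 : S)) = Quotient.mk st b
        rw [RightAct.act_one]
      act_mul := fun x s t => Quotient.inductionOn x fun b => by
        show Quotient.mk st ((b ⊛ s) ⊛ t) = Quotient.mk st (b ⊛ (s * t))
        rw [RightAct.act_mul]
      nonempty := Nonempty.map (Quotient.mk st) (RightAct.nonempty (S := S)) }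
  have hπ : ∀ (b : B) (s : S),
      Quotient.mk st (b ⊛ s) = (Quotient.mk st b) ⊛ s := fun _ _ => rfl
  set C' : Set (Quotient st) := Quotient.mk st '' C with hC'
  have hres : ∀ (a b : B), r a b → f a = f b := by
    rintro a b (rfl | ⟨_, _, hab⟩)
    · rfl
    · exact hab
  set fbar : Quotient st → Q := Quotient.lift f hres with hfbar
  have hsub : IsSubact S C' := by
    constructor
    · obtain ⟨c, hc⟩ := hC.1
      exact ⟨Quotient.mk st c, ⟨c, hc, rfl⟩⟩
    · rintro x ⟨c, hc, rfl⟩ s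
      exact ⟨c ⊛ s, hC.2 c hc s, rfl⟩
  have hindC' : IndecomposableSet S C' := by
    rintro ⟨X, Y, hX, hY, hunion, hdisj⟩
    refine hInd ⟨(Quotient.mk st) ⁻¹' X ∩ C, (Quotient.mk st) ⁻¹' Y ∩ C, ?_, ?_, ?_, ?_⟩
    · constructor
      · obtain ⟨x, hx⟩ := hX.1
        have : x ∈ C' := hunion ▸ Set.mem_union_left _ hx
        obtain ⟨c, hc, rfl⟩ := this
        exact ⟨c, hx, hc⟩
      · rintro b ⟨hb1, hb2⟩ s
        exact ⟨by rw [Set.mem_preimage, hπ]; exact hX.2 _ hb1 s, hC.2 b hb2 s⟩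
    · constructor
      · obtain ⟨x, hx⟩ := hY.1
        have : x ∈ C' := hunion ▸ Set.mem_union_right _ hx
        obtain ⟨c, hc, rfl⟩ := this
        exact ⟨c, hx, hc⟩
      · rintro b ⟨hb1, hb2⟩ s
        exact ⟨by rw [Set.mem_preimage, hπ]; exact hY.2 _ hb1 s, hC.2 b hb2 s⟩
    · ext c
      constructor
      · rintro (⟨_, hc⟩ | ⟨_, hc⟩) <;> exact hc
      · intro hc
        have : Quotient.mk st c ∈ X ∪ Y := hunion ▸ ⟨c, hc, rfl⟩
        rcases this with h | h
        · exact Or.inl ⟨h, hc⟩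
        · exact Or.inr ⟨h, hc⟩
    · ext c
      simp only [Set.mem_inter_iff, Set.mem_preimage, Set.mem_empty_iff_false, iff_false]
      rintro ⟨⟨h1, _⟩, ⟨h2, _⟩⟩
      exact absurd (hdisj ▸ Set.mem_inter h1 h2) (Set.notMem_empty _)
  have hfbarhom : IsActHomOn S fbar C' := by
    rintro x ⟨c, hc, rfl⟩ s
    show fbar (Quotient.mk st (c ⊛ s)) = f c ⊛ s
    show f (c ⊛ s) = f c ⊛ s
    exact hf c hc s
  have hfbarinj : Set.InjOn fbar C' := by
    rintro x ⟨a, ha, rfl⟩ y ⟨b, hb, rfl⟩ hxy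
    exact Quotient.sound (Or.inr ⟨ha, hb, hxy⟩)
  obtain ⟨g, hg, hgeq⟩ := hQ (Quotient st) C' hsub hindC' fbar hfbarhom hfbarinj
  refine ⟨fun b => g (Quotient.mk st b), fun b s => by
    show g (Quotient.mk st (b ⊛ s)) = g (Quotient.mk st b) ⊛ s
    rw [hπ]; exact hg _ s, ?_⟩
  intro c hc
  exact hgeq ⟨c, hc, rfl⟩

/-- Every InD-injective act has a zero element. -/
theorem my_zero_of_ind {Q : Type u} [RightAct S Q] (hQ : InDInjective S Q) :
    ∃ θ : Q, IsZeroElem S θ := by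
  classical
  obtain ⟨q0⟩ := (RightAct.nonempty (S := S) (A := Q))
  letI actO : RightAct S (Option Q) :=
    { act := fun x s => x.map (· ⊛ s)
      act_one := fun x => by cases x <;> simp [RightAct.act_one]
      act_mul := fun x s t => by cases x <;> simp [RightAct.act_mul]
      nonempty := ⟨none⟩ }
  have hact_some : ∀ (q : Q) (s : S), (some q) ⊛ s = some (q ⊛ s) := fun _ _ => rfl
  have hact_none : ∀ (s : S), (none : Option Q) ⊛ s = none := fun _ => rfl
  set C : Set (Option Q) := {x | ∃ s : S, x = some (q0 ⊛ s)} with hCdef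
  have hsub : IsSubact S C := by
    constructor
    · exact ⟨some (q0 ⊛ 1), 1, rfl⟩
    · rintro x ⟨s, rfl⟩ t
      exact ⟨s * t, by rw [hact_some, RightAct.act_mul]⟩
  have hind : IndecomposableSet S C := by
    rintro ⟨X, Y, hX, hY, hunion, hdisj⟩
    have hone : some (q0 ⊛ (1 : S)) ∈ X ∪ Y := hunion ▸ ⟨1, rfl⟩
    have hCsub : ∀ Z : Set (Option Q), IsSubact S Z → some (q0 ⊛ (1:S)) ∈ Z →
        C ⊆ Z := by
      rintro Z hZ h1 x ⟨s, rfl⟩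
      have := hZ.2 _ h1 s
      rwa [hact_some, RightAct.act_mul, one_mul] at this
    rcases hone with h | h
    · obtain ⟨y, hy⟩ := hY.1
      have hyC : y ∈ C := hunion ▸ Set.mem_union_right _ hy
      have : y ∈ X := hCsub X hX h hyC
      exact absurd (hdisj ▸ Set.mem_inter this hy) (Set.notMem_empty _)
    · obtain ⟨y, hy⟩ := hX.1
      have hyC : y ∈ C := hunion ▸ Set.mem_union_left _ hy
      have : y ∈ Y := hCsub Y hY h hyC
      exact absurd (hdisj ▸ Set.mem_inter hy this) (Set.notMem_empty _)
  set f : Option Q → Q := fun x => x.getD q0 with hfdef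
  have hfhom : IsActHomOn S f C := by
    rintro x ⟨s, rfl⟩ t
    rfl
  obtain ⟨g, hg, -⟩ := hQ (Option Q) C hsub hind f hfhom
  refine ⟨g none, fun s => ?_⟩
  have := hg none s
  rw [hact_none] at this
  exact this.symm

/-- Retract of an InD-injective act is InD-injective. -/
theorem my_retract_ind {A B : Type u} [RightAct S A] [RightAct S B]
    (hB : InDInjective S B) (hret : IsRetractOf S A B) : InDInjective S A := by
  obtain ⟨i, p, hi, hp, hpi⟩ := hret
  intro B' _ C hC hInd f hf
  obtain ⟨g, hg, hgeq⟩ := hB B' C hC hInd (fun b => i (f b))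
    (fun c hc s => by show i (f (c ⊛ s)) = i (f c) ⊛ s; rw [hf c hc s, hi])
  refine ⟨fun b => p (g b), fun b s => by
    show p (g (b ⊛ s)) = p (g b) ⊛ s
    rw [hg, hp], ?_⟩
  intro c hc
  show p (g c) = f c
  rw [hgeq hc, hpi]

/-- Product of InD-injective acts is InD-injective. -/
theorem my_prod_ind {I : Type u} (A : I → Type u) [∀ i, RightAct S (A i)]
    (hA : ∀ i, InDInjective S (A i)) : InDInjective S (∀ i, A i) := by
  intro B _ C hC hInd f hf
  have h : ∀ i, ∃ g : B → A i, IsActHom S g ∧ Set.EqOn g (fun b => f b i) C := by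
    intro i
    exact hA i B C hC hInd (fun b => f b i)
      (fun c hc s => by show f (c ⊛ s) i = f c i ⊛ s; rw [hf c hc s]; rfl)
  choose g hg hgeq using h
  refine ⟨fun b i => g i b, fun b s => funext fun i => hg i b s, ?_⟩
  intro c hc
  funext i
  exact hgeq i hc

/-- Each factor of an InD-injective product is InD-injective. -/
theorem my_factor_ind {I : Type u} (A : I → Type u) [∀ i, RightAct S (A i)]
    (hP : InDInjective S (∀ i, A i)) : ∀ i, InDInjective S (A i) := by
  classical
  obtain ⟨θ, hθ⟩ := my_zero_of_ind hP
  have hθi : ∀ (i : I) (s : S), θ i ⊛ s = θ i := by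
    intro i s
    exact congrFun (hθ s) i
  intro i
  refine my_retract_ind hP ⟨fun a j => if h : i = j then h ▸ a else θ j, fun x => x i,
    ?_, fun x s => rfl, fun a => by simp⟩
  intro a s
  funext j
  show (if h : i = j then h ▸ (a ⊛ s) else θ j) = (if h : i = j then h ▸ a else θ j) ⊛ s
  by_cases h : i = j
  · subst h; simp
  · simp [h, hθi j s]

/-- Coproduct of InD-injective acts is InD-injective. -/
theorem my_coprod_ind {I : Type u} [Nonempty I] (A : I → Type u)
    [∀ i, RightAct S (A i)] (hA : ∀ i, InDInjective S (A i)) :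
    InDInjective S (Σ i, A i) := by
  classical
  intro B _ C hC hInd f hf
  obtain ⟨c0, hc0⟩ := hC.1
  set i0 : I := (f c0).1 with hi0
  have hfst : ∀ (c : B), c ∈ C → ∀ s : S, (f (c ⊛ s)).1 = (f c).1 := by
    intro c hc s
    rw [hf c hc s]
    rfl
  have key : ∀ c ∈ C, (f c).1 = i0 := by
    by_contra hcon
    push_neg at hcon
    obtain ⟨c1, hc1, hc1ne⟩ := hcon
    refine hInd ⟨{c ∈ C | (f c).1 = i0}, {c ∈ C | (f c).1 ≠ i0}, ?_, ?_, ?_, ?_⟩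
    · exact ⟨⟨c0, hc0, rfl⟩, fun c ⟨hc, hceq⟩ s =>
        ⟨hC.2 c hc s, by rw [hfst c hc s]; exact hceq⟩⟩
    · exact ⟨⟨c1, hc1, hc1ne⟩, fun c ⟨hc, hceq⟩ s =>
        ⟨hC.2 c hc s, by rw [hfst c hc s]; exact hceq⟩⟩
    · ext c
      constructor
      · rintro (⟨hc, _⟩ | ⟨hc, _⟩) <;> exact hc
      · intro hc
        by_cases h : (f c).1 = i0
        · exact Or.inl ⟨hc, h⟩
        · exact Or.inr ⟨hc, h⟩
    · ext c
      simp only [Set.mem_inter_iff, Set.mem_setOf_eq, Set.mem_empty_iff_false, iff_false]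
      rintro ⟨⟨_, h1⟩, ⟨_, h2⟩⟩
      exact h2 h1
  obtain ⟨q0⟩ := (RightAct.nonempty (S := S) (A := A i0))
  set u : (Σ i, A i) → A i0 := fun x => if h : x.1 = i0 then h ▸ x.2 else q0 with hu
  have hsig : ∀ (j : I) (y : A j) (s : S), (⟨j, y⟩ : Σ i, A i) ⊛ s = ⟨j, y ⊛ s⟩ :=
    fun _ _ _ => rfl
  have hu_act : ∀ (x : Σ i, A i), x.1 = i0 → ∀ s : S, u (x ⊛ s) = u x ⊛ s := by
    rintro ⟨j, y⟩ h s
    dsimp at h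
    subst h
    rw [hsig]
    simp [hu]
  have hu_eq : ∀ (x : Σ i, A i), x.1 = i0 → x = ⟨i0, u x⟩ := by
    rintro ⟨j, y⟩ h
    dsimp at h
    subst h
    simp [hu]
  obtain ⟨g', hg', hgeq'⟩ := hA i0 B C hC hInd (fun b => u (f b))
    (fun c hc s => by
      show u (f (c ⊛ s)) = u (f c) ⊛ s
      rw [hf c hc s]
      exact hu_act (f c) (key c hc) s)
  refine ⟨fun b => ⟨i0, g' b⟩, fun b s => by
    show (⟨i0, g' (b ⊛ s)⟩ : Σ i, A i) = (⟨i0, g' b⟩ : Σ i, A i) ⊛ s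
    rw [hg' b s, hsig], ?_⟩
  intro c hc
  show (⟨i0, g' c⟩ : Σ i, A i) = f c
  rw [hgeq' hc, ← hu_eq (f c) (key c hc)]

end Aux

/-- (i) retracts of InD-injective (PInD-injective) acts are InD-injective
(PInD-injective); (ii) a product is InD-injective (PInD-injective) iff all components
are; (iii) coproducts of InD-injective (PInD-injective) acts are InD-injective
(PInD-injective). -/
theorem retract_prod_coprod_inDInjective (S : Type u) [Monoid S] :
    (∀ (A B : Type u) [RightAct S A] [RightAct S B],
        InDInjective S B → IsRetractOf S A B → InDInjective S A) ∧
    (∀ (A B : Type u) [RightAct S A] [RightAct S B],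
        PInDInjective S B → IsRetractOf S A B → PInDInjective S A) ∧
    (∀ (I : Type u) (A : I → Type u) [∀ i, RightAct S (A i)],
        InDInjective S (∀ i, A i) ↔ ∀ i, InDInjective S (A i)) ∧
    (∀ (I : Type u) (A : I → Type u) [∀ i, RightAct S (A i)],
        PInDInjective S (∀ i, A i) ↔ ∀ i, PInDInjective S (A i)) ∧
    (∀ (I : Type u) [Nonempty I] (A : I → Type u) [∀ i, RightAct S (A i)],
        (∀ i, InDInjective S (A i)) → InDInjective S (Σ i, A i)) ∧
    (∀ (I : Type u) [Nonempty I] (A : I → Type u) [∀ i, RightAct S (A i)],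
        (∀ i, PInDInjective S (A i)) → PInDInjective S (Σ i, A i)) := by
  exact ⟨fun A B _ _ hB hret => my_retract_ind hB hret,
    fun A B _ _ hB hret => my_ind_imp_pind (my_retract_ind (my_pind_imp_ind hB) hret),
    fun I A _ => ⟨my_factor_ind A, my_prod_ind A⟩,
    fun I A _ => ⟨fun h i => my_ind_imp_pind (my_factor_ind A (my_pind_imp_ind h) i),
      fun h => my_ind_imp_pind (my_prod_ind A (fun i => my_pind_imp_ind (h i)))⟩,
    fun I _ A _ hA => my_coprod_ind A hA,
    fun I _ A _ hA => my_ind_imp_pind (my_coprod_ind A (fun i => my_pind_imp_ind (hA i)))⟩
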